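/- (Tarski) If F is a (2^ℵ₀)⁺-complete, ℵ₁-saturated filter over a set S, then there is an F-positive set X ⊆ S such that F↾X is an ultrafilter. -/

import Mathlib

/-!
Suppose no positive set is an atom of `F`, so that every positive set `X` splits into two
positive pieces `X ∩ spl X` and `X \ spl X`. Splitting transfinitely along `ω₁` assigns to
each point a branch; the points sharing the branch of `x` below level `α` form the cell of `x`
at level `α`. There are at most `2 ^ ℵ₀` cells per level, so by `(2 ^ ℵ₀)⁺`-completeness
almost every point lies in a positive cell at every one of the `ℵ₁` levels. For such a point
`x₀`, the parts of its cells that leave its branch at the next split are `ℵ₁` pairwise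
disjoint positive sets, against saturation.
-/

open Cardinal Filter Function Set

universe u

theorem Filter.eventually_frequently_apply_eq {S ι : Type u} {F : Filter S} {κ : Cardinal.{u}}
    [CardinalInterFilter F κ] (f : S → ι) (hι : #ι < κ) :
    ∀ᶠ x in F, ∃ᶠ y in F, f y = f x := by
  have : ∀ᶠ x in F, ∀ i, f x = i → ∃ᶠ y in F, f y = i := by
    refine (eventually_cardinal_forall hι).2 fun i => ?_
    by_cases hi : ∃ᶠ y in F, f y = i
    · exact Eventually.of_forall fun _ _ => hi
    · exact (not_frequently.1 hi).mono fun x hx hxi => absurd hxi hx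
  exact this.mono fun x hx => hx (f x) rfl

namespace SplitTree

section

variable {S O : Type*} [LinearOrder O] [WellFoundedLT O] (spl : Set S → Set S)

/-- The side of the split that `x` falls on at level `α`: the split of the set of points
that agree with `x` at all earlier levels. -/
noncomputable def side : O → S → Prop :=
  IsWellFounded.fix (· < ·) fun α ih x => x ∈ spl {y | ∀ β (h : β < α), ih β h y ↔ ih β h x}

def cell (α : O) (x : S) : Set S :=
  {y | ∀ β < α, side spl β y ↔ side spl β x}

theorem side_iff (α : O) (x : S) : side spl α x ↔ x ∈ spl (cell spl α x) := by
  rw [side, IsWellFounded.fix_eq]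
  rfl

theorem mem_cell_self (α : O) (x : S) : x ∈ cell spl α x := fun _ _ => Iff.rfl

theorem side_iff_of_mem_cell {α : O} {x y : S} (hy : y ∈ cell spl α x) :
    side spl α y ↔ y ∈ spl (cell spl α x) := by
  have : cell spl α y = cell spl α x :=
    ext fun z => forall₂_congr fun β hβ => iff_congr Iff.rfl (hy β hβ)
  rw [side_iff, this]

variable {spl}

theorem frequently_mem_cell_and_side_ne {F : Filter S}
    (hspl : ∀ X, (∃ᶠ x in F, x ∈ X) →
      (∃ᶠ x in F, x ∈ X ∧ x ∈ spl X) ∧ ∃ᶠ x in F, x ∈ X ∧ x ∉ spl X)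
    {α : O} {x : S} (hx : ∃ᶠ y in F, y ∈ cell spl α x) :
    ∃ᶠ y in F, y ∈ cell spl α x ∧ ¬(side spl α y ↔ side spl α x) := by
  by_cases hside : side spl α x
  · exact (hspl _ hx).2.mono fun y ⟨hy, hys⟩ =>
      ⟨hy, by simp [side_iff_of_mem_cell spl hy, hys, hside]⟩
  · exact (hspl _ hx).1.mono fun y ⟨hy, hys⟩ =>
      ⟨hy, by simp [side_iff_of_mem_cell spl hy, hys, hside]⟩

end

theorem eventually_forall_frequently_mem_cell {S O : Type u} [LinearOrder O] [WellFoundedLT O]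
    {spl : Set S → Set S} {F : Filter S} {κ : Cardinal.{u}} [CardinalInterFilter F κ]
    (hO : #O < κ) (hlevel : ∀ α : O, #(Set (Iio α)) < κ) :
    ∀ᶠ x in F, ∀ α : O, ∃ᶠ y in F, y ∈ cell spl α x := by
  refine (eventually_cardinal_forall hO).2 fun α => ?_
  refine (eventually_frequently_apply_eq (fun x => {β : Iio α | side spl β.1 x}) (hlevel α)).mono
    fun x hx => hx.mono fun y hy β hβ => ?_
  exact Set.ext_iff.1 hy ⟨β, hβ⟩

end SplitTree

open SplitTree in
theorem exists_pairwise_disjoint_frequently_of_split {S O : Type u} [LinearOrder O]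
    [WellFoundedLT O] {F : Filter S} [F.NeBot] {κ : Cardinal.{u}} [CardinalInterFilter F κ]
    (hO : #O < κ) (hlevel : ∀ α : O, #(Set (Iio α)) < κ) {spl : Set S → Set S}
    (hspl : ∀ X, (∃ᶠ x in F, x ∈ X) →
      (∃ᶠ x in F, x ∈ X ∧ x ∈ spl X) ∧ ∃ᶠ x in F, x ∈ X ∧ x ∉ spl X) :
    ∃ Q : O → Set S, (∀ α, ∃ᶠ x in F, x ∈ Q α) ∧ Pairwise (Disjoint on Q) := by
  obtain ⟨x₀, hx₀⟩ :=
    (eventually_forall_frequently_mem_cell (spl := spl) (F := F) hO hlevel).exists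
  refine ⟨fun α => {y | y ∈ cell spl α x₀ ∧ ¬(side spl α y ↔ side spl α x₀)},
    fun α => frequently_mem_cell_and_side_ne hspl (hx₀ α), ?_⟩
  refine (pairwise_disjoint_on _).2 fun α β hαβ => Set.disjoint_left.2 ?_
  rintro y ⟨-, hyα⟩ ⟨hyβ, -⟩
  exact hyα (hyβ α hαβ)

theorem mk_omega1_lt_succ_continuum : #(aleph.{u} 1).ord.ToType < Order.succ 𝔠 := by
  rw [mk_ord_toType, Order.lt_succ_iff]
  exact aleph_one_le_continuum

theorem mk_set_Iio_omega1_lt_succ_continuum (α : (aleph.{u} 1).ord.ToType) :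
    #(Set (Iio α)) < Order.succ 𝔠 := by
  have hα : #(Iio α) ≤ ℵ₀ := by
    rw [← Order.lt_succ_iff, succ_aleph0]
    simpa using mk_Iio_lt α
  rw [Order.lt_succ_iff, mk_set, ← two_power_aleph0]
  exact power_le_power_left two_ne_zero hα

theorem nonempty_embedding_omega1.{v, w} :
    Nonempty ((aleph.{v} 1).ord.ToType ↪ (aleph.{w} 1).ord.ToType) := by
  rw [← lift_mk_le', mk_ord_toType, mk_ord_toType, lift_aleph, lift_aleph,
    Ordinal.lift_one, Ordinal.lift_one]

theorem frequently_mem_iff_forall_inter_nonempty {S : Type*} {F : Filter S} {X : Set S} :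
    (∃ᶠ x in F, x ∈ X) ↔ ∀ Y ∈ F, (X ∩ Y).Nonempty := by
  simp only [frequently_iff, Set.inter_comm X]
  rfl

/-- **Tarski, ZFC.** If `F` is a `(2^ℵ₀)⁺`-complete, `ℵ₁`-saturated filter
over a set `S`, then there is an `F`-positive set `X ⊆ S` such that
`F↾X = {Y : Y ∪ (S \ X) ∈ F}` is an ultrafilter.  Here `X` is `F`-positive iff it meets
every member of `F`; `F` is `(2^ℵ₀)⁺`-complete iff it is closed under intersections of
fewer than `(2^ℵ₀)⁺` (i.e. at most continuum many) of its members; and `F` is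
`ℵ₁`-saturated iff among any `ω₁`-indexed family of positive sets two have positive
intersection. -/
theorem tarski_saturated_filter {S : Type u} (F : Filter S) [F.NeBot]
    (hcomp : ∀ (ι : Type u) (g : ι → Set S),
      Cardinal.mk ι < Order.succ Cardinal.continuum →
      (∀ i, g i ∈ F) → (⋂ i, g i) ∈ F)
    (hsat : ∀ Xf : (Cardinal.aleph 1).ord.ToType → Set S,
      (∀ i, ∀ Y ∈ F, (Xf i ∩ Y).Nonempty) →
      ∃ i j, i ≠ j ∧ ∀ Y ∈ F, ((Xf i ∩ Xf j) ∩ Y).Nonempty) :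
    ∃ X : Set S, (∀ Y ∈ F, (X ∩ Y).Nonempty) ∧
      ∀ Y : Set S, Y ∪ Xᶜ ∈ F ∨ Yᶜ ∪ Xᶜ ∈ F := by
  have : CardinalInterFilter F (Order.succ 𝔠) := ⟨fun T hT hmem => by
    simpa only [sInter_eq_iInter] using hcomp T Subtype.val hT fun i => hmem i i.2⟩
  by_contra hcon
  push Not at hcon
  have hsplit : ∀ X : Set S, (∃ᶠ x in F, x ∈ X) →
      ∃ Y : Set S, (∃ᶠ x in F, x ∈ X ∧ x ∈ Y) ∧ ∃ᶠ x in F, x ∈ X ∧ x ∉ Y := by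
    intro X hX
    obtain ⟨Y, hY, hYc⟩ := hcon X (frequently_mem_iff_forall_inter_nonempty.1 hX)
    exact ⟨Y,
      (not_eventually.1 hYc).mono fun x (hx : x ∉ Yᶜ ∪ Xᶜ) => by simpa [and_comm] using hx,
      (not_eventually.1 hY).mono fun x (hx : x ∉ Y ∪ Xᶜ) => by simpa [and_comm] using hx⟩
  choose! spl hspl using hsplit
  obtain ⟨Q, hQ, hdisj⟩ := exists_pairwise_disjoint_frequently_of_split
    mk_omega1_lt_succ_continuum mk_set_Iio_omega1_lt_succ_continuum hspl
  obtain ⟨e⟩ := nonempty_embedding_omega1.{_, u}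
  obtain ⟨i, j, hij, hQij⟩ :=
    hsat (Q ∘ e) fun i => frequently_mem_iff_forall_inter_nonempty.1 (hQ (e i))
  obtain ⟨x, ⟨hxi, hxj⟩, -⟩ := hQij univ univ_mem
  exact Set.disjoint_left.1 (hdisj (e.injective.ne hij)) hxi hxj
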